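/- arXiv:2603.01670 — 2 statements merged into one kernel-verified Lean document; each statement's English description precedes it below -/
import Mathlib

section
/- Let A and B be n × n complex matrices and let I_r = {i_1,...,i_r} ⊆ [n] be a set of r distinct indices. Then |det(A_{I_r}) − det(B_{I_r})| ≤ r! · Σ_{j=1}^r (max_{k,l} |A_{k,l}|)^{j−1} · (max_{k,l} |A_{k,l} − B_{k,l}|) · (max_{k,l} |B_{k,l}|)^{r−j}, where M_{I_r} denotes the r × r submatrix of M restricted to rows and columns indexed by I_r. -/
/-!
Expanding both determinants over permutations reduces the claim to one product per
permutation, and `∏ fᵢ - ∏ gᵢ` telescopes into `r` terms, the `j`-th of which has `j` factors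
of `f`, one factor `f - g` and `r - 1 - j` factors of `g`.
-/

open Finset

theorem Finset.norm_prod_sub_prod_le {ι R : Type*} [NormedCommRing R] [NormOneClass R]
    (s : Finset ι) {f g : ι → R} {a b d : ℝ} (hf : ∀ i ∈ s, ‖f i‖ ≤ a)
    (hg : ∀ i ∈ s, ‖g i‖ ≤ b) (hfg : ∀ i ∈ s, ‖f i - g i‖ ≤ d) :
    ‖∏ i ∈ s, f i - ∏ i ∈ s, g i‖ ≤
      ∑ j ∈ range #s, a ^ j * d * b ^ (#s - 1 - j) := by
  induction s using Finset.cons_induction with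
  | empty => simp
  | cons x s _ ih =>
    simp only [forall_mem_cons] at hf hg hfg
    have ha : 0 ≤ a := (norm_nonneg _).trans hf.1
    have hprod_g : ‖∏ i ∈ s, g i‖ ≤ b ^ #s :=
      (Finset.norm_prod_le _ _).trans <| by
        simpa using prod_le_prod (fun i _ ↦ norm_nonneg (g i)) hg.2
    have hsplit : f x * ∏ i ∈ s, f i - g x * ∏ i ∈ s, g i
        = f x * (∏ i ∈ s, f i - ∏ i ∈ s, g i) + (f x - g x) * ∏ i ∈ s, g i := by ring
    rw [prod_cons, prod_cons, hsplit, card_cons, sum_range_succ']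
    refine (norm_add_le _ _).trans (add_le_add ?_ ?_)
    · refine (norm_mul_le _ _).trans ?_
      refine (mul_le_mul hf.1 (ih hf.2 hg.2 hfg.2) (norm_nonneg _) ha).trans_eq ?_
      rw [mul_sum]
      refine sum_congr rfl fun j _ ↦ ?_
      rw [show #s + 1 - 1 - (j + 1) = #s - 1 - j by omega]
      ring
    · refine (norm_mul_le _ _).trans ?_
      simpa using mul_le_mul hfg.1 hprod_g (norm_nonneg _) ((norm_nonneg _).trans hfg.1)

theorem Matrix.norm_det_sub_det_le {ι R : Type*} [Fintype ι] [DecidableEq ι] [NormedCommRing R]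
    [NormOneClass R] (M N : Matrix ι ι R) {a b d : ℝ} (hM : ∀ i j, ‖M i j‖ ≤ a)
    (hN : ∀ i j, ‖N i j‖ ≤ b) (hMN : ∀ i j, ‖M i j - N i j‖ ≤ d) :
    ‖M.det - N.det‖ ≤ ((Fintype.card ι).factorial : ℝ) *
      ∑ j ∈ range (Fintype.card ι), a ^ j * d * b ^ (Fintype.card ι - 1 - j) := by
  rw [det_apply, det_apply, ← sum_sub_distrib]
  refine (norm_sum_le _ _).trans ?_
  calc ∑ σ : Equiv.Perm ι, ‖σ.sign • ∏ i, M (σ i) i - σ.sign • ∏ i, N (σ i) i‖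
      ≤ ∑ _σ : Equiv.Perm ι,
          ∑ j ∈ range (Fintype.card ι), a ^ j * d * b ^ (Fintype.card ι - 1 - j) := by
        refine sum_le_sum fun σ _ ↦ ?_
        rw [← smul_sub, norm_units_zsmul]
        exact norm_prod_sub_prod_le univ (fun _ _ ↦ hM _ _) (fun _ _ ↦ hN _ _)
          fun _ _ ↦ hMN _ _
    _ = _ := by rw [sum_const, card_univ, Fintype.card_perm, nsmul_eq_mul]

theorem det_submatrix_diff_le_general (n r : ℕ) (A B : Matrix (Fin n) (Fin n) ℂ)
    (e : Fin r → Fin n) :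
    ‖(A.submatrix e e).det - (B.submatrix e e).det‖ ≤
      (r.factorial : ℝ) *
        ∑ j ∈ Finset.range r,
          (⨆ k : Fin n, ⨆ l : Fin n, ‖A k l‖) ^ j *
            (⨆ k : Fin n, ⨆ l : Fin n, ‖A k l - B k l‖) *
            (⨆ k : Fin n, ⨆ l : Fin n, ‖B k l‖) ^ (r - 1 - j) := by
  have le_iSup_iSup (f : Fin n → Fin n → ℝ) (k l : Fin n) : f k l ≤ ⨆ k, ⨆ l, f k l :=
    (le_ciSup (Finite.bddAbove_range _) l).trans
      (le_ciSup (f := fun k ↦ ⨆ l, f k l) (Finite.bddAbove_range _) k)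
  simpa using Matrix.norm_det_sub_det_le (A.submatrix e e) (B.submatrix e e)
    (fun i j ↦ le_iSup_iSup (fun k l ↦ ‖A k l‖) (e i) (e j))
    (fun i j ↦ le_iSup_iSup (fun k l ↦ ‖B k l‖) (e i) (e j))
    (fun i j ↦ le_iSup_iSup (fun k l ↦ ‖A k l - B k l‖) (e i) (e j))

/-- Uniform determinant stability bound for submatrices on a set of `r` distinct indices. -/
theorem det_submatrix_diff_le (n r : ℕ) (A B : Matrix (Fin n) (Fin n) ℂ)
    (e : Fin r → Fin n) (he : Function.Injective e) :
    ‖(A.submatrix e e).det - (B.submatrix e e).det‖ ≤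
      (r.factorial : ℝ) *
        ∑ j ∈ Finset.range r,
          (⨆ k : Fin n, ⨆ l : Fin n, ‖A k l‖) ^ j *
            (⨆ k : Fin n, ⨆ l : Fin n, ‖A k l - B k l‖) *
            (⨆ k : Fin n, ⨆ l : Fin n, ‖B k l‖) ^ (r - 1 - j) :=
  det_submatrix_diff_le_general n r A B e
end

section
/- For positive integers r ≤ n, the number of non-injective functions from a set of r elements into a set of n elements satisfies n^r − n(n−1)⋯(n−r+1) ≤ 2^{r−1} · n^{r−1}. -/
/-!
A non-injective map `f : Fin r → Fin n` identifies some pair `i < j`, and for a fixed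
pair there are `n ^ (r - 1)` maps with `f i = f j`. Hence there are at most
`(r.choose 2) * n ^ (r - 1)` non-injective maps, and `r.choose 2 ≤ 2 ^ (r - 1)`.
Without counting maps, this bound follows by induction on `r` from
`n * n.descFactorial r = n.descFactorial (r + 1) + r * n.descFactorial r`.
-/

namespace Nat

theorem mul_descFactorial_eq (n k : ℕ) :
    n * n.descFactorial k = n.descFactorial (k + 1) + k * n.descFactorial k := by
  rcases le_or_gt k n with hkn | hnk
  · rw [descFactorial_succ, ← add_mul, Nat.sub_add_cancel hkn]
  · simp [descFactorial_eq_zero_iff_lt.mpr hnk]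

theorem succ_choose_two (r : ℕ) : (r + 1).choose 2 = r + r.choose 2 := by
  rw [choose_succ_succ', choose_one_right]

theorem pow_succ_le_descFactorial_add_choose_two_mul (n r : ℕ) :
    n ^ (r + 1) ≤ n.descFactorial (r + 1) + (r + 1).choose 2 * n ^ r := by
  induction r with
  | zero => simp
  | succ r ih =>
    calc n ^ (r + 2) = n * n ^ (r + 1) := by ring
      _ ≤ n * (n.descFactorial (r + 1) + (r + 1).choose 2 * n ^ r) := by gcongr
      _ = n.descFactorial (r + 2) + (r + 1) * n.descFactorial (r + 1)
            + (r + 1).choose 2 * n ^ (r + 1) := by rw [mul_add, mul_descFactorial_eq]; ring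
      _ ≤ n.descFactorial (r + 2) + (r + 1) * n ^ (r + 1) + (r + 1).choose 2 * n ^ (r + 1) := by
            gcongr; exact descFactorial_le_pow n (r + 1)
      _ = n.descFactorial (r + 2) + (r + 2).choose 2 * n ^ (r + 1) := by
            rw [succ_choose_two (r + 1)]; ring

theorem pow_sub_descFactorial_le_choose_two_mul (n r : ℕ) :
    n ^ r - n.descFactorial r ≤ r.choose 2 * n ^ (r - 1) := by
  cases r with
  | zero => simp
  | succ r =>
    have := pow_succ_le_descFactorial_add_choose_two_mul n r
    simp only [Nat.add_sub_cancel]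
    omega

theorem choose_two_le_two_pow_pred (r : ℕ) : r.choose 2 ≤ 2 ^ (r - 1) := by
  induction r with
  | zero => simp
  | succ r ih =>
    rcases r with _ | r
    · simp
    · have hr : r + 1 ≤ 2 ^ r := Nat.lt_two_pow_self
      rw [succ_choose_two, Nat.add_sub_cancel, pow_succ]
      simp only [Nat.add_sub_cancel] at ih
      omega

end Nat

theorem noninjective_count_le_general (r n : ℕ) :
    n ^ r - n.descFactorial r ≤ 2 ^ (r - 1) * n ^ (r - 1) :=
  (Nat.pow_sub_descFactorial_le_choose_two_mul n r).trans
    (Nat.mul_le_mul_right _ (Nat.choose_two_le_two_pow_pred r))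

/-- The number of non-injective functions from an `r`-element set to an `n`-element set
is at most `2^(r-1) · n^(r-1)`. -/
theorem noninjective_count_le (r n : ℕ) (hr : 1 ≤ r) (hrn : r ≤ n) :
    n ^ r - n.descFactorial r ≤ 2 ^ (r - 1) * n ^ (r - 1) :=
  noninjective_count_le_general r n
end
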